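/- Let W : X1 × X2 → Y be a MAC on finite alphabets invariant under the action of a group G, i.e. W(g·y | g·x1, g·x2) = W(y|x1,x2) for all g ∈ G. Write O_G(S) for the set of orbits of G on S, write z_T for the projection of an orbit z onto a factor T (itself an orbit), and W(w) := W(y|x1,x2) for any (x1,x2,y) ∈ w (well-defined by invariance). Then for all positive integers k1, k2, S^NS(W,k1,k2) equals the value of the following linear program over real families r, r^1, r^2 indexed by w ∈ O_G(X1×X2×Y) and p indexed by u ∈ O_G(X1×X2): maximize (1/(k1 k2)) Σ_w W(w) r_w subject to: Σ_{w : w_Y = v} r_w = |v| for all v ∈ O_G(Y); Σ_{w : w_{X2 Y} = v2} r^1_w = k1 Σ_{w : w_{X2 Y} = v2} r_w for all v2 ∈ O_G(X2×Y); Σ_{w : w_{X1 Y} = v1} r^2_w = k2 Σ_{w : w_{X1 Y} = v1} r_w for all v1 ∈ O_G(X1×Y); Σ_{u : u_{X2} = (v2)_{X2}} p_u = (|(v2)_{X2}|/|v2|) k1 Σ_{w : w_{X2 Y} = v2} r^2_w for all v2 ∈ O_G(X2×Y); Σ_{u : u_{X1} = (v1)_{X1}} p_u = (|(v1)_{X1}|/|v1|)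 k2 Σ_{w : w_{X1 Y} = v1} r^1_w for all v1 ∈ O_G(X1×Y); 0 ≤ r_w, r_w ≤ r^1_w ≤ (|w|/|w_{X1 X2}|) p_{w_{X1 X2}}, r_w ≤ r^2_w ≤ (|w|/|w_{X1 X2}|) p_{w_{X1 X2}}, and (|w|/|w_{X1 X2}|) p_{w_{X1 X2}} − r^1_w − r^2_w + r_w ≥ 0 for all w ∈ O_G(X1×X2×Y). -/

import Mathlib

open Finset

/-- A tripartite non-signaling box `P(x1,x2,(j1,j2)|i1,i2,y)` between the two senders
and the receiver, with `k1` and `k2` messages.  Arguments of `P` are in the order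
`x1 x2 j1 j2 i1 i2 y`. -/
def IsNSBox {X1 X2 Y : Type*} [Fintype X1] [Fintype X2] [Fintype Y] (k1 k2 : ℕ)
    (P : X1 → X2 → Fin k1 → Fin k2 → Fin k1 → Fin k2 → Y → ℝ) : Prop :=
  (∀ x1 x2 j1 j2 i1 i2 y, 0 ≤ P x1 x2 j1 j2 i1 i2 y) ∧
  (∀ i1 i2 y, ∑ x1, ∑ x2, ∑ j1, ∑ j2, P x1 x2 j1 j2 i1 i2 y = 1) ∧
  (∀ x2 j1 j2 i1 i1' i2 y,
    ∑ x1, P x1 x2 j1 j2 i1 i2 y = ∑ x1, P x1 x2 j1 j2 i1' i2 y) ∧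
  (∀ x1 j1 j2 i1 i2 i2' y,
    ∑ x2, P x1 x2 j1 j2 i1 i2 y = ∑ x2, P x1 x2 j1 j2 i1 i2' y) ∧
  (∀ x1 x2 i1 i2 y y',
    ∑ j1, ∑ j2, P x1 x2 j1 j2 i1 i2 y = ∑ j1, ∑ j2, P x1 x2 j1 j2 i1 i2 y')

/-- `S^{NS}(W,k1,k2)`: maximum joint success probability with (tripartite)
non-signaling assistance between both senders and the receiver. -/
noncomputable def SNS {X1 X2 Y : Type*} [Fintype X1] [Fintype X2] [Fintype Y]
    (W : X1 → X2 → Y → ℝ) (k1 k2 : ℕ) : ℝ :=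
  sSup {s : ℝ | ∃ P : X1 → X2 → Fin k1 → Fin k2 → Fin k1 → Fin k2 → Y → ℝ,
    IsNSBox k1 k2 P ∧
    s = (1 / ((k1 : ℝ) * (k2 : ℝ))) * ∑ i1, ∑ i2, ∑ x1, ∑ x2, ∑ y,
      W x1 x2 y * P x1 x2 i1 i2 i1 i2 y}

open scoped Classical

/-- `s` is an orbit of the action of a group `G` on `T`. -/
def IsOrbit (G : Type*) [Group G] {T : Type*} [MulAction G T] (s : Set T) : Prop :=
  ∃ t : T, s = MulAction.orbit G t

/-- The (common) value of an invariant channel `W` on an orbit `w ⊆ X1 × X2 × Y`. -/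
noncomputable def Wval {X1 X2 Y : Type*} (W : X1 → X2 → Y → ℝ)
    (w : Set (X1 × X2 × Y)) : ℝ :=
  if h : w.Nonempty then W h.some.1 h.some.2.1 h.some.2.2 else 0


/-!
A non-signaling box `P` yields a feasible point of the non-symmetrized linear program with the
same value: `r(x, y) = ∑ᵢ P(x, i | i, y)`, and `r¹`, `r²`, `p` are the same sums with the first,
the second, or both decoded messages left free. Conversely, every feasible point is realized by
a box whose entries only depend on which of `j₁ = i₁` and `j₂ = i₂` hold. For an invariant `W`,
summing a feasible point over orbits and, in the other direction, spreading the weight of each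
orbit uniformly over its points transport feasible points between the pointwise and the orbit
program without changing the value. So both sides are suprema of the same set of values.
-/

open MulAction

section Orbits

variable {G α : Type*} [Group G] [MulAction G α] [Fintype α]

variable (G α) in
noncomputable def orbits : Finset (Set α) := univ.image (orbit G)

lemma mem_orbits {w : Set α} : w ∈ orbits G α ↔ IsOrbit G w := by
  simp [orbits, IsOrbit, eq_comm]

lemma finsum_isOrbit (F : Set α → ℝ) :
    ∑ᶠ w ∈ {w : Set α | IsOrbit G w}, F w = ∑ w ∈ orbits G α, F w := by
  rw [← finsum_mem_coe_finset]
  congr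
  ext w
  simp [mem_orbits]

lemma finsum_isOrbit_and (Q : Set α → Prop) (F : Set α → ℝ) :
    ∑ᶠ w ∈ {w : Set α | IsOrbit G w ∧ Q w}, F w = ∑ w ∈ orbits G α with Q w, F w := by
  rw [← finsum_mem_coe_finset]
  congr
  ext w
  simp [mem_orbits]

lemma sum_orbits_filter_sum (Q : Set α → Prop) (F : α → ℝ) :
    ∑ w ∈ orbits G α with Q w, ∑ t ∈ w.toFinset, F t = ∑ t with Q (orbit G t), F t := by
  symm
  rw [← sum_fiberwise_of_maps_to (g := orbit G) (t := (orbits G α).filter Q)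
    (fun t ht => by simp_all [orbits])]
  refine sum_congr rfl fun w hw => sum_congr ?_ fun _ _ => rfl
  obtain ⟨⟨a, rfl⟩, hQ⟩ : IsOrbit G w ∧ Q w := by simpa [mem_orbits] using hw
  ext t
  simp only [mem_filter, mem_univ, true_and, Set.mem_toFinset]
  constructor
  · rintro ⟨-, h⟩
    exact h ▸ mem_orbit_self t
  · intro h
    have := orbit_eq_iff.2 h
    exact ⟨this ▸ hQ, this⟩

lemma sum_orbits_sum (F : α → ℝ) : ∑ w ∈ orbits G α, ∑ t ∈ w.toFinset, F t = ∑ t, F t := by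
  simpa using sum_orbits_filter_sum (G := G) (fun _ => True) F

lemma orbit_ncard_pos (a : α) : 0 < ((orbit G a).ncard : ℝ) := by
  exact_mod_cast (Set.nonempty_of_mem (mem_orbit_self a)).ncard_pos (Set.toFinite _)

lemma sum_orbit_of_invariant {h : α → ℝ} (hh : ∀ (g : G) a, h (g • a) = h a) (a : α) :
    ∑ t ∈ (orbit G a).toFinset, h t = (orbit G a).ncard * h a := by
  rw [sum_congr rfl fun t ht => ?_, sum_const, nsmul_eq_mul, Set.ncard_eq_toFinset_card']
  obtain ⟨g, rfl⟩ := Set.mem_toFinset.1 ht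
  exact hh g a

lemma finsum_isOrbit_mul_sum {c : Set α → ℝ} {φ : α → ℝ} (hc : ∀ a, c (orbit G a) = φ a)
    (hφ : ∀ (g : G) a, φ (g • a) = φ a) (F : α → ℝ) :
    ∑ᶠ w ∈ {w : Set α | IsOrbit G w}, c w * ∑ t ∈ w.toFinset, F t = ∑ t, φ t * F t := by
  rw [finsum_isOrbit, ← sum_orbits_sum (G := G)]
  refine sum_congr rfl fun w hw => ?_
  obtain ⟨a, rfl⟩ := mem_orbits.1 hw
  rw [mul_sum]
  refine sum_congr rfl fun t ht => ?_
  obtain ⟨g, rfl⟩ := Set.mem_toFinset.1 ht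
  rw [hc, hφ]

end Orbits

noncomputable def fiberSum {α β : Type*} [Fintype α] (f : α → β) (F : α → ℝ) (b : β) : ℝ :=
  ∑ t with f t = b, F t

noncomputable def orbitFiberSum (G : Type*) [Group G] {α β : Type*} [MulAction G α]
    (f : α → β) (r : Set α → ℝ) (v : Set β) : ℝ :=
  ∑ᶠ w ∈ {w : Set α | IsOrbit G w ∧ f '' w = v}, r w

lemma orbitFiberSum_congr {G α β : Type*} [Group G] [MulAction G α] {f : α → β}
    {r r' : Set α → ℝ} (h : ∀ a, r (orbit G a) = r' (orbit G a)) (v : Set β) :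
    orbitFiberSum G f r v = orbitFiberSum G f r' v :=
  finsum_mem_congr rfl fun _ ⟨⟨a, ha⟩, _⟩ => ha ▸ h a

noncomputable def orbitDensity (G : Type*) [Group G] {α : Type*} [MulAction G α]
    (r : Set α → ℝ) (t : α) : ℝ :=
  r (orbit G t) / (orbit G t).ncard

section Equivariant

variable {G α β : Type*} [Group G] [MulAction G α] [MulAction G β] {f : α → β}

lemma image_orbit (hf : ∀ (g : G) a, f (g • a) = g • f a) (a : α) :
    f '' orbit G a = orbit G (f a) := by
  ext b
  simp only [Set.mem_image, mem_orbit_iff]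
  constructor
  · rintro ⟨t, ⟨g, rfl⟩, rfl⟩
    exact ⟨g, (hf g a).symm⟩
  · rintro ⟨g, rfl⟩
    exact ⟨g • a, ⟨g, rfl⟩, hf g a⟩

lemma orbitDensity_smul (r : Set α → ℝ) (g : G) (a : α) :
    orbitDensity G r (g • a) = orbitDensity G r a := by
  simp only [orbitDensity, orbit_smul]

variable [Fintype α]

lemma sum_orbitDensity (r : Set α → ℝ) (a : α) :
    ∑ t ∈ (orbit G a).toFinset, orbitDensity G r t = r (orbit G a) := by
  rw [sum_orbit_of_invariant (orbitDensity_smul r) a, orbitDensity,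
    mul_div_cancel₀ _ (orbit_ncard_pos a).ne']

lemma fiberSum_smul (hf : ∀ (g : G) a, f (g • a) = g • f a) {F : α → ℝ}
    (hF : ∀ (g : G) a, F (g • a) = F a) (g : G) (b : β) :
    fiberSum f F (g • b) = fiberSum f F b := by
  simp only [fiberSum, sum_filter]
  exact Fintype.sum_equiv (MulAction.toPerm g⁻¹) _ _ fun t => by simp [hf, hF, inv_smul_eq_iff]

variable [Fintype β]

lemma orbitFiberSum_sum_toFinset (hf : ∀ (g : G) a, f (g • a) = g • f a) (F : α → ℝ) (b : β) :
    orbitFiberSum G f (fun w => ∑ t ∈ w.toFinset, F t) (orbit G b)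
      = ∑ b' ∈ (orbit G b).toFinset, fiberSum f F b' := by
  rw [orbitFiberSum, finsum_isOrbit_and, sum_orbits_filter_sum]
  simp only [fiberSum, image_orbit hf, orbit_eq_iff]
  rw [← sum_fiberwise_of_maps_to (s := univ.filter fun t => f t ∈ orbit G b)
    (t := (orbit G b).toFinset) (fun t ht => by simpa using ht)]
  refine sum_congr rfl fun b' hb' => sum_congr ?_ fun _ _ => rfl
  ext x
  simp only [mem_filter, mem_univ, true_and]
  exact ⟨fun h => h.2, fun h => ⟨h ▸ Set.mem_toFinset.1 hb', h⟩⟩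

-- The fiber sum of the invariant function `orbitDensity G r` is invariant, so it is determined
-- by its sum over `orbit G b`, which `orbitFiberSum_sum_toFinset` computes.
lemma fiberSum_orbitDensity (hf : ∀ (g : G) a, f (g • a) = g • f a) (r : Set α → ℝ) (b : β) :
    fiberSum f (orbitDensity G r) b = orbitFiberSum G f r (orbit G b) / (orbit G b).ncard := by
  rw [eq_div_iff (orbit_ncard_pos b).ne', mul_comm,
    ← sum_orbit_of_invariant (fiberSum_smul hf (orbitDensity_smul r)),
    ← orbitFiberSum_sum_toFinset hf]
  exact orbitFiberSum_congr (fun a => sum_orbitDensity r a) _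

lemma sum_orbit_comp (hf : ∀ (g : G) a, f (g • a) = g • f a) (φ : β → ℝ) (a : α) :
    ∑ t ∈ (orbit G a).toFinset, φ (f t)
      = (orbit G a).ncard / (orbit G (f a)).ncard * ∑ b ∈ (orbit G (f a)).toFinset, φ b := by
  set N := fiberSum f (fun t => if t ∈ orbit G a then 1 else 0)
  have hN : ∀ b, N b = if b ∈ orbit G (f a) then N (f a) else 0 := by
    intro b
    split_ifs with hb
    · obtain ⟨g, rfl⟩ := hb
      exact fiberSum_smul hf (fun g t => by simp only [← orbit_eq_iff, orbit_smul]) g (f a)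
    · refine sum_eq_zero fun t ht => if_neg fun hta => hb ?_
      rw [← (mem_filter.1 ht).2, ← image_orbit hf]
      exact Set.mem_image_of_mem f hta
  have key : ∀ φ : β → ℝ, ∑ t ∈ (orbit G a).toFinset, φ (f t)
      = N (f a) * ∑ b ∈ (orbit G (f a)).toFinset, φ b := by
    intro φ
    calc ∑ t ∈ (orbit G a).toFinset, φ (f t)
        = ∑ b, N b * φ b := by
          rw [← Set.filter_mem_univ_eq_toFinset, sum_filter, ← sum_fiberwise univ f]
          refine sum_congr rfl fun b _ => ?_
          simp only [N, fiberSum, sum_mul]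
          refine sum_congr rfl fun t ht => ?_
          rw [(mem_filter.1 ht).2]
          split_ifs <;> simp
      _ = N (f a) * ∑ b ∈ (orbit G (f a)).toFinset, φ b := by
          rw [sum_congr rfl fun b _ => by rw [hN b], mul_sum]
          simp only [ite_mul, zero_mul]
          rw [← sum_filter, Set.filter_mem_univ_eq_toFinset]
  have hcard := key fun _ => 1
  simp only [sum_const, nsmul_eq_mul, mul_one, ← Set.ncard_eq_toFinset_card'] at hcard
  rw [key, hcard, mul_div_cancel_right₀ _ (orbit_ncard_pos (f a)).ne']

end Equivariant

section ProductFibers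

variable {α β γ : Type*} [Fintype α] [Fintype β] [Fintype γ]

lemma fiberSum_fst (F : α × β → ℝ) (a : α) : fiberSum Prod.fst F a = ∑ b, F (a, b) := by
  rw [fiberSum, sum_filter, Fintype.sum_prod_type, sum_eq_single a (fun a' _ h => by simp [h])
    (by simp)]
  simp

lemma fiberSum_snd (F : α × β → ℝ) (b : β) : fiberSum Prod.snd F b = ∑ a, F (a, b) := by
  rw [fiberSum, sum_filter, Fintype.sum_prod_type_right, sum_eq_single b
    (fun b' _ h => by simp [h]) (by simp)]
  simp

lemma fiberSum_fst_snd_snd (F : α × β × γ → ℝ) (a : α) (c : γ) :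
    fiberSum (fun t : α × β × γ => (t.1, t.2.2)) F (a, c) = ∑ b, F (a, b, c) := by
  simp [fiberSum, sum_filter, Fintype.sum_prod_type, ite_and]

lemma fiberSum_snd_snd (F : α × β × γ → ℝ) (c : γ) :
    fiberSum (fun t : α × β × γ => t.2.2) F c = ∑ a, ∑ b, F (a, b, c) := by
  simp [fiberSum, sum_filter, Fintype.sum_prod_type]

end ProductFibers

section FiniteSums

lemma sum_comm₄ {A B C D : Type*} [Fintype A] [Fintype B] [Fintype C] [Fintype D]
    (F : A → B → C → D → ℝ) :
    ∑ a, ∑ b, ∑ c, ∑ d, F a b c d = ∑ c, ∑ d, ∑ a, ∑ b, F a b c d := by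
  simp only [sum_comm (s := (univ : Finset A))]
  simp only [sum_comm (s := (univ : Finset B))]

lemma inclusion_exclusion_nonneg {ι κ : Type*} [Fintype ι] [Fintype κ] {M : ι → κ → ℝ}
    (hM : ∀ j l, 0 ≤ M j l) (i : ι) (k : κ) :
    0 ≤ ∑ j, ∑ l, M j l - ∑ j, M j k - ∑ l, M i l + M i k := by
  have hrow : ∀ j, ∑ l, M j l = M j k + ∑ l ∈ univ.erase k, M j l :=
    fun j => (add_sum_erase _ _ (mem_univ k)).symm
  have hcol := add_sum_erase univ (fun j => ∑ l ∈ univ.erase k, M j l) (mem_univ i)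
  have hrest : 0 ≤ ∑ j ∈ univ.erase i, ∑ l ∈ univ.erase k, M j l :=
    sum_nonneg fun j _ => sum_nonneg fun l _ => hM j l
  simp only [hrow, sum_add_distrib] at hcol ⊢
  linarith

lemma sum_sum_eq_mul_sum_diag {k : ℕ} {Q : Fin k → Fin k → ℝ}
    (hQ : ∀ j i i', Q j i = Q j i') : ∑ i, ∑ j, Q j i = k * ∑ i, Q i i := by
  rw [sum_congr rfl fun i _ => sum_congr rfl fun j _ => hQ j i j, sum_const, card_univ,
    Fintype.card_fin, nsmul_eq_mul]

lemma inv_card_mul_sum_of_forall_eq {Y : Type*} [Fintype Y] {M : Y → ℝ}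
    (hM : ∀ y y', M y = M y') (y : Y) : (Fintype.card Y : ℝ)⁻¹ * ∑ y', M y' = M y := by
  have : (Fintype.card Y : ℝ) ≠ 0 := Nat.cast_ne_zero.2 (Fintype.card_pos_iff.2 ⟨y⟩).ne'
  rw [sum_congr rfl fun y' _ => hM y' y, sum_const, card_univ, nsmul_eq_mul,
    inv_mul_cancel_left₀ this]

end FiniteSums

structure LPSolution (X1 X2 Y : Type*) [Fintype X1] [Fintype X2] (k1 k2 : ℕ) where
  r : X1 × X2 × Y → ℝ
  r1 : X1 × X2 × Y → ℝ
  r2 : X1 × X2 × Y → ℝ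
  p : X1 × X2 → ℝ
  r_nonneg : ∀ t, 0 ≤ r t
  r_le_r1 : ∀ t, r t ≤ r1 t
  r_le_r2 : ∀ t, r t ≤ r2 t
  inclusion_exclusion : ∀ t, 0 ≤ p (t.1, t.2.1) - r1 t - r2 t + r t
  sum_r : ∀ y, ∑ x1, ∑ x2, r (x1, x2, y) = 1
  sum_r1 : ∀ x2 y, ∑ x1, r1 (x1, x2, y) = k1 * ∑ x1, r (x1, x2, y)
  sum_r2 : ∀ x1 y, ∑ x2, r2 (x1, x2, y) = k2 * ∑ x2, r (x1, x2, y)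
  sum_p_fst : ∀ x2 y, ∑ x1, p (x1, x2) = k1 * ∑ x1, r2 (x1, x2, y)
  sum_p_snd : ∀ x1 y, ∑ x2, p (x1, x2) = k2 * ∑ x2, r1 (x1, x2, y)

namespace LPSolution

variable {X1 X2 Y : Type*} [Fintype X1] [Fintype X2] {k1 k2 : ℕ} (S : LPSolution X1 X2 Y k1 k2)

noncomputable def value [Fintype Y] (W : X1 → X2 → Y → ℝ) : ℝ :=
  1 / ((k1 : ℝ) * k2) * ∑ t : X1 × X2 × Y, W t.1 t.2.1 t.2.2 * S.r t

lemma r1_le_p (t : X1 × X2 × Y) : S.r1 t ≤ S.p (t.1, t.2.1) := by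
  linarith [S.inclusion_exclusion t, S.r_le_r2 t]

lemma r2_le_p (t : X1 × X2 × Y) : S.r2 t ≤ S.p (t.1, t.2.1) := by
  linarith [S.inclusion_exclusion t, S.r_le_r1 t]

end LPSolution

noncomputable def boxValue {X1 X2 Y : Type*} [Fintype X1] [Fintype X2] [Fintype Y] {k1 k2 : ℕ}
    (W : X1 → X2 → Y → ℝ) (P : X1 → X2 → Fin k1 → Fin k2 → Fin k1 → Fin k2 → Y → ℝ) : ℝ :=
  1 / ((k1 : ℝ) * k2) * ∑ i1, ∑ i2, ∑ x1, ∑ x2, ∑ y, W x1 x2 y * P x1 x2 i1 i2 i1 i2 y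

section BoxToLP

variable {X1 X2 Y : Type*} [Fintype X1] [Fintype X2] {k1 k2 : ℕ}
  (P : X1 → X2 → Fin k1 → Fin k2 → Fin k1 → Fin k2 → Y → ℝ)

def boxR (t : X1 × X2 × Y) : ℝ := ∑ i1, ∑ i2, P t.1 t.2.1 i1 i2 i1 i2 t.2.2

def boxR1 (t : X1 × X2 × Y) : ℝ := ∑ i1, ∑ j1, ∑ i2, P t.1 t.2.1 j1 i2 i1 i2 t.2.2

def boxR2 (t : X1 × X2 × Y) : ℝ := ∑ i2, ∑ j2, ∑ i1, P t.1 t.2.1 i1 j2 i1 i2 t.2.2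

variable [Fintype Y]

-- By non-signaling towards the receiver the inner sum does not depend on `y`; averaging over `y`
-- (rather than evaluating at some `y`) also covers an empty `Y`.
noncomputable def boxP (x : X1 × X2) : ℝ :=
  (Fintype.card Y : ℝ)⁻¹ * ∑ y, ∑ i1, ∑ i2, ∑ j1, ∑ j2, P x.1 x.2 j1 j2 i1 i2 y

variable {P}

lemma IsNSBox.nonneg (hP : IsNSBox k1 k2 P) x1 x2 j1 j2 i1 i2 y :
    0 ≤ P x1 x2 j1 j2 i1 i2 y := hP.1 x1 x2 j1 j2 i1 i2 y

lemma IsNSBox.sum_fst_indep (hP : IsNSBox k1 k2 P) x2 j1 j2 i1 i1' i2 y :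
    ∑ x1, P x1 x2 j1 j2 i1 i2 y = ∑ x1, P x1 x2 j1 j2 i1' i2 y := hP.2.2.1 x2 j1 j2 i1 i1' i2 y

lemma IsNSBox.sum_snd_indep (hP : IsNSBox k1 k2 P) x1 j1 j2 i1 i2 i2' y :
    ∑ x2, P x1 x2 j1 j2 i1 i2 y = ∑ x2, P x1 x2 j1 j2 i1 i2' y := hP.2.2.2.1 x1 j1 j2 i1 i2 i2' y

lemma IsNSBox.sum_msg_indep (hP : IsNSBox k1 k2 P) x1 x2 i1 i2 y y' :
    ∑ j1, ∑ j2, P x1 x2 j1 j2 i1 i2 y = ∑ j1, ∑ j2, P x1 x2 j1 j2 i1 i2 y' :=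
  hP.2.2.2.2 x1 x2 i1 i2 y y'

lemma IsNSBox.sum_sum_indep (hP : IsNSBox k1 k2 P) j1 j2 i1 i2 i1' i2' y :
    ∑ x1, ∑ x2, P x1 x2 j1 j2 i1 i2 y = ∑ x1, ∑ x2, P x1 x2 j1 j2 i1' i2' y := by
  rw [sum_comm, sum_congr rfl fun x2 _ => hP.sum_fst_indep x2 j1 j2 i1 i1' i2 y, sum_comm]
  exact sum_congr rfl fun x1 _ => hP.sum_snd_indep ..

lemma IsNSBox.boxP_eq (hP : IsNSBox k1 k2 P) (x : X1 × X2) (y : Y) :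
    boxP P x = ∑ i1, ∑ i2, ∑ j1, ∑ j2, P x.1 x.2 j1 j2 i1 i2 y :=
  inv_card_mul_sum_of_forall_eq (fun y y' => sum_congr rfl fun i1 _ => sum_congr rfl
    fun i2 _ => hP.sum_msg_indep _ _ i1 i2 y y') y

lemma IsNSBox.boxR_le_boxR1 (hP : IsNSBox k1 k2 P) (t : X1 × X2 × Y) : boxR P t ≤ boxR1 P t :=
  sum_le_sum fun i1 _ => single_le_sum (f := fun j1 => ∑ i2, P t.1 t.2.1 j1 i2 i1 i2 t.2.2)
    (fun _ _ => sum_nonneg fun _ _ => hP.nonneg ..) (mem_univ i1)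

lemma IsNSBox.boxR_le_boxR2 (hP : IsNSBox k1 k2 P) (t : X1 × X2 × Y) : boxR P t ≤ boxR2 P t := by
  rw [boxR, sum_comm]
  exact sum_le_sum fun i2 _ => single_le_sum (f := fun j2 => ∑ i1, P t.1 t.2.1 i1 j2 i1 i2 t.2.2)
    (fun _ _ => sum_nonneg fun _ _ => hP.nonneg ..) (mem_univ i2)

lemma IsNSBox.inclusion_exclusion (hP : IsNSBox k1 k2 P) (t : X1 × X2 × Y) :
    0 ≤ boxP P (t.1, t.2.1) - boxR1 P t - boxR2 P t + boxR P t := by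
  obtain ⟨x1, x2, y⟩ := t
  have e1 : boxR1 P (x1, x2, y) = ∑ i1, ∑ i2, ∑ j1, P x1 x2 j1 i2 i1 i2 y :=
    sum_congr rfl fun _ _ => sum_comm
  have e2 : boxR2 P (x1, x2, y) = ∑ i1, ∑ i2, ∑ j2, P x1 x2 i1 j2 i1 i2 y := sum_comm_cycle
  rw [hP.boxP_eq _ y, e1, e2, boxR]
  simp only [← sum_sub_distrib, ← sum_add_distrib]
  refine sum_nonneg fun i1 _ => sum_nonneg fun i2 _ => ?_
  simpa only [sum_sub_distrib] using inclusion_exclusion_nonneg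
    (M := fun j1 j2 => P x1 x2 j1 j2 i1 i2 y) (fun _ _ => hP.nonneg ..) i1 i2

lemma IsNSBox.sum_boxR (hP : IsNSBox k1 k2 P) (hk1 : 0 < k1) (hk2 : 0 < k2) (y : Y) :
    ∑ x1, ∑ x2, boxR P (x1, x2, y) = 1 := by
  simp only [boxR]
  rw [sum_comm₄, sum_congr rfl fun i1 _ => sum_congr rfl fun i2 _ =>
      hP.sum_sum_indep i1 i2 i1 i2 ⟨0, hk1⟩ ⟨0, hk2⟩ y, ← sum_comm₄]
  exact hP.2.1 _ _ y

lemma IsNSBox.sum_fst_boxR1 (hP : IsNSBox k1 k2 P) (x2 : X2) (y : Y) :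
    ∑ x1, boxR1 P (x1, x2, y) = k1 * ∑ x1, boxR P (x1, x2, y) := by
  simp only [boxR, boxR1, sum_comm (s := (univ : Finset X1))]
  exact sum_sum_eq_mul_sum_diag fun j1 i1 i1' => sum_congr rfl fun i2 _ => hP.sum_fst_indep ..

lemma IsNSBox.sum_snd_boxR2 (hP : IsNSBox k1 k2 P) (x1 : X1) (y : Y) :
    ∑ x2, boxR2 P (x1, x2, y) = k2 * ∑ x2, boxR P (x1, x2, y) := by
  calc ∑ x2, boxR2 P (x1, x2, y) = ∑ i2, ∑ j2, ∑ i1, ∑ x2, P x1 x2 i1 j2 i1 i2 y := by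
        simp only [boxR2, sum_comm (s := (univ : Finset X2))]
    _ = k2 * ∑ i2, ∑ i1, ∑ x2, P x1 x2 i1 i2 i1 i2 y :=
        sum_sum_eq_mul_sum_diag fun j2 i2 i2' => sum_congr rfl fun i1 _ => hP.sum_snd_indep ..
    _ = k2 * ∑ x2, boxR P (x1, x2, y) := by
        rw [sum_comm]
        simp only [boxR, sum_comm (s := (univ : Finset X2))]

lemma IsNSBox.sum_fst_boxP (hP : IsNSBox k1 k2 P) (x2 : X2) (y : Y) :
    ∑ x1, boxP P (x1, x2) = k1 * ∑ x1, boxR2 P (x1, x2, y) := by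
  calc ∑ x1, boxP P (x1, x2) = ∑ i1, ∑ j1, ∑ i2, ∑ j2, ∑ x1, P x1 x2 j1 j2 i1 i2 y := by
        simp only [hP.boxP_eq _ y, sum_comm (s := (univ : Finset X1))]
        exact sum_congr rfl fun i1 _ => sum_comm
    _ = k1 * ∑ i1, ∑ i2, ∑ j2, ∑ x1, P x1 x2 i1 j2 i1 i2 y :=
        sum_sum_eq_mul_sum_diag fun j1 i1 i1' => sum_congr rfl fun i2 _ =>
          sum_congr rfl fun j2 _ => hP.sum_fst_indep ..
    _ = k1 * ∑ x1, boxR2 P (x1, x2, y) := by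
        simp only [boxR2, sum_comm (s := (univ : Finset X1))]
        rw [← sum_comm_cycle]

lemma IsNSBox.sum_snd_boxP (hP : IsNSBox k1 k2 P) (x1 : X1) (y : Y) :
    ∑ x2, boxP P (x1, x2) = k2 * ∑ x2, boxR1 P (x1, x2, y) := by
  calc ∑ x2, boxP P (x1, x2) = ∑ i2, ∑ j2, ∑ i1, ∑ j1, ∑ x2, P x1 x2 j1 j2 i1 i2 y := by
        simp only [hP.boxP_eq _ y, sum_comm (s := (univ : Finset X2))]
        rw [sum_congr rfl fun i1 _ => sum_comm, sum_comm₄]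
    _ = k2 * ∑ i2, ∑ i1, ∑ j1, ∑ x2, P x1 x2 j1 i2 i1 i2 y :=
        sum_sum_eq_mul_sum_diag fun j2 i2 i2' => sum_congr rfl fun i1 _ =>
          sum_congr rfl fun j1 _ => hP.sum_snd_indep ..
    _ = k2 * ∑ x2, boxR1 P (x1, x2, y) := by
        simp only [boxR1, sum_comm (s := (univ : Finset X2))]
        rw [← sum_comm_cycle]

namespace LPSolution

noncomputable def ofBox (hP : IsNSBox k1 k2 P) (hk1 : 0 < k1) (hk2 : 0 < k2) :
    LPSolution X1 X2 Y k1 k2 where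
  r := boxR P
  r1 := boxR1 P
  r2 := boxR2 P
  p := boxP P
  r_nonneg _ := sum_nonneg fun _ _ => sum_nonneg fun _ _ => hP.nonneg ..
  r_le_r1 := hP.boxR_le_boxR1
  r_le_r2 := hP.boxR_le_boxR2
  inclusion_exclusion := hP.inclusion_exclusion
  sum_r := hP.sum_boxR hk1 hk2
  sum_r1 := hP.sum_fst_boxR1
  sum_r2 := hP.sum_snd_boxR2
  sum_p_fst := hP.sum_fst_boxP
  sum_p_snd := hP.sum_snd_boxP

lemma value_ofBox (W : X1 → X2 → Y → ℝ) (hP : IsNSBox k1 k2 P) (hk1 : 0 < k1) (hk2 : 0 < k2) :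
    (ofBox hP hk1 hk2).value W = boxValue W P := by
  simp only [value, boxValue, ofBox, boxR, Fintype.sum_prod_type, mul_sum]
  simp only [sum_comm (s := (univ : Finset X1))]
  simp only [sum_comm (s := (univ : Finset X2))]
  simp only [sum_comm (s := (univ : Finset Y))]

end LPSolution

end BoxToLP

noncomputable def offDiagWeight (k : ℕ) (j i : Fin k) : ℝ :=
  if j = i then 0 else ((k : ℝ) - 1)⁻¹

section OffDiagWeight

variable {k : ℕ}

lemma offDiagWeight_nonneg (j i : Fin k) : 0 ≤ offDiagWeight k j i := by
  have : (1 : ℝ) ≤ k := by exact_mod_cast i.pos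
  unfold offDiagWeight
  split_ifs
  exacts [le_rfl, inv_nonneg.2 (by linarith)]

lemma ite_add_mul_offDiagWeight (j i : Fin k) :
    (if j = i then 1 else 0) + ((k : ℝ) - 1) * offDiagWeight k j i = 1 := by
  unfold offDiagWeight
  split_ifs with h
  · ring
  · have hk : k ≠ 1 := by
      rintro rfl
      exact h (Subsingleton.elim j i)
    rw [zero_add, mul_inv_cancel₀ (sub_ne_zero.2 (Nat.cast_ne_one.2 hk))]

lemma sum_offDiagWeight (i : Fin k) :
    ∑ j, offDiagWeight k j i = ((k : ℝ) - 1) * ((k : ℝ) - 1)⁻¹ := by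
  have h : ∀ j, offDiagWeight k j i = ((k : ℝ) - 1)⁻¹ - if j = i then ((k : ℝ) - 1)⁻¹ else 0 :=
    fun j => by unfold offDiagWeight; split_ifs <;> ring
  simp only [h, sum_sub_distrib, sum_const, card_univ, Fintype.card_fin, nsmul_eq_mul,
    sum_ite_eq', mem_univ, if_true]
  ring

end OffDiagWeight

-- `a * a⁻¹` is `0`, not `1`, when `a = 0`; the hypothesis then forces `F = 0`. This absorbs the
-- degenerate case `k = 1` of `offDiagWeight`, where `a = k - 1`.
lemma mul_mul_inv_mul_of_sum_eq {X : Type*} [Fintype X] {F : X → ℝ} (hF : ∀ x, 0 ≤ F x)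
    {a C : ℝ} (hsum : ∑ x, F x = a * C) (x : X) : a * a⁻¹ * F x = F x := by
  rcases eq_or_ne a 0 with rfl | ha
  · rw [zero_mul] at hsum
    rw [zero_mul, zero_mul, (sum_eq_zero_iff_of_nonneg fun x _ => hF x).1 hsum x (mem_univ x)]
  · rw [mul_inv_cancel₀ ha, one_mul]

namespace LPSolution

variable {X1 X2 Y : Type*} [Fintype X1] [Fintype X2] {k1 k2 : ℕ} (S : LPSolution X1 X2 Y k1 k2)

def slack (t : X1 × X2 × Y) : ℝ := S.p (t.1, t.2.1) - S.r1 t - S.r2 t + S.r t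

lemma sum_fst_r1_sub_r (x2 : X2) (y : Y) :
    ∑ x1, (S.r1 (x1, x2, y) - S.r (x1, x2, y)) = ((k1 : ℝ) - 1) * ∑ x1, S.r (x1, x2, y) := by
  rw [sum_sub_distrib, S.sum_r1]
  ring

lemma sum_snd_r2_sub_r (x1 : X1) (y : Y) :
    ∑ x2, (S.r2 (x1, x2, y) - S.r (x1, x2, y)) = ((k2 : ℝ) - 1) * ∑ x2, S.r (x1, x2, y) := by
  rw [sum_sub_distrib, S.sum_r2]
  ring

lemma sum_fst_slack (x2 : X2) (y : Y) :
    ∑ x1, S.slack (x1, x2, y) = ((k1 : ℝ) - 1) * ∑ x1, (S.r2 (x1, x2, y) - S.r (x1, x2, y)) := by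
  simp only [slack, sum_add_distrib, sum_sub_distrib, S.sum_p_fst x2 y, S.sum_r1]
  ring

lemma sum_snd_slack (x1 : X1) (y : Y) :
    ∑ x2, S.slack (x1, x2, y) = ((k2 : ℝ) - 1) * ∑ x2, (S.r1 (x1, x2, y) - S.r (x1, x2, y)) := by
  simp only [slack, sum_add_distrib, sum_sub_distrib, S.sum_p_snd x1 y, S.sum_r2]
  ring

lemma sum_sum_p (y : Y) : ∑ x1, ∑ x2, S.p (x1, x2) = k1 * k2 := by
  rw [sum_comm]
  simp only [S.sum_p_fst _ y, ← mul_sum]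
  rw [sum_comm]
  simp only [S.sum_r2 _ y, ← mul_sum, S.sum_r y]
  ring

-- The decoded pair `(j1, j2)` is right in both, only the first, only the second or neither
-- coordinate with masses `r`, `r2 - r`, `r1 - r`, `slack`, spread uniformly over wrong guesses.
noncomputable def toBox : X1 → X2 → Fin k1 → Fin k2 → Fin k1 → Fin k2 → Y → ℝ :=
  fun x1 x2 j1 j2 i1 i2 y => ((k1 : ℝ) * k2)⁻¹ *
    ((if j1 = i1 then 1 else 0) * (if j2 = i2 then 1 else 0) * S.r (x1, x2, y)
      + (if j1 = i1 then 1 else 0) * offDiagWeight k2 j2 i2 * (S.r2 (x1, x2, y) - S.r (x1, x2, y))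
      + offDiagWeight k1 j1 i1 * (if j2 = i2 then 1 else 0) * (S.r1 (x1, x2, y) - S.r (x1, x2, y))
      + offDiagWeight k1 j1 i1 * offDiagWeight k2 j2 i2 * S.slack (x1, x2, y))

lemma toBox_diag (x1 : X1) (x2 : X2) (i1 : Fin k1) (i2 : Fin k2) (y : Y) :
    S.toBox x1 x2 i1 i2 i1 i2 y = ((k1 : ℝ) * k2)⁻¹ * S.r (x1, x2, y) := by
  simp [toBox, offDiagWeight]

lemma toBox_nonneg (x1 : X1) (x2 : X2) (j1 : Fin k1) (j2 : Fin k2) (i1 : Fin k1) (i2 : Fin k2)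
    (y : Y) : 0 ≤ S.toBox x1 x2 j1 j2 i1 i2 y := by
  have := S.r_nonneg (x1, x2, y)
  have := S.r_le_r1 (x1, x2, y)
  have := S.r_le_r2 (x1, x2, y)
  have := S.inclusion_exclusion (x1, x2, y)
  have := offDiagWeight_nonneg j1 i1
  have := offDiagWeight_nonneg j2 i2
  unfold toBox slack
  positivity

lemma sum_fst_toBox (x2 : X2) (j1 : Fin k1) (j2 : Fin k2) (i1 : Fin k1) (i2 : Fin k2) (y : Y) :
    ∑ x1, S.toBox x1 x2 j1 j2 i1 i2 y = ((k1 : ℝ) * k2)⁻¹ *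
      ((if j2 = i2 then 1 else 0) * ∑ x1, S.r (x1, x2, y)
        + offDiagWeight k2 j2 i2 * ∑ x1, (S.r2 (x1, x2, y) - S.r (x1, x2, y))) := by
  simp only [toBox, ← mul_sum, sum_add_distrib, S.sum_fst_slack, S.sum_fst_r1_sub_r]
  linear_combination (((k1 : ℝ) * k2)⁻¹ * ((if j2 = i2 then 1 else 0) * ∑ x1, S.r (x1, x2, y)
    + offDiagWeight k2 j2 i2 * ∑ x1, (S.r2 (x1, x2, y) - S.r (x1, x2, y))))
    * ite_add_mul_offDiagWeight j1 i1

lemma sum_snd_toBox (x1 : X1) (j1 : Fin k1) (j2 : Fin k2) (i1 : Fin k1) (i2 : Fin k2) (y : Y) :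
    ∑ x2, S.toBox x1 x2 j1 j2 i1 i2 y = ((k1 : ℝ) * k2)⁻¹ *
      ((if j1 = i1 then 1 else 0) * ∑ x2, S.r (x1, x2, y)
        + offDiagWeight k1 j1 i1 * ∑ x2, (S.r1 (x1, x2, y) - S.r (x1, x2, y))) := by
  simp only [toBox, ← mul_sum, sum_add_distrib, S.sum_snd_slack, S.sum_snd_r2_sub_r]
  linear_combination (((k1 : ℝ) * k2)⁻¹ * ((if j1 = i1 then 1 else 0) * ∑ x2, S.r (x1, x2, y)
    + offDiagWeight k1 j1 i1 * ∑ x2, (S.r1 (x1, x2, y) - S.r (x1, x2, y))))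
    * ite_add_mul_offDiagWeight j2 i2

lemma sum_msg_toBox (x1 : X1) (x2 : X2) (i1 : Fin k1) (i2 : Fin k2) (y : Y) :
    ∑ j1, ∑ j2, S.toBox x1 x2 j1 j2 i1 i2 y = ((k1 : ℝ) * k2)⁻¹ * S.p (x1, x2) := by
  have h1 := mul_mul_inv_mul_of_sum_eq (fun x1 => sub_nonneg.2 (S.r_le_r1 (x1, x2, y)))
    (S.sum_fst_r1_sub_r x2 y) x1
  have h2 := mul_mul_inv_mul_of_sum_eq (fun x2 => sub_nonneg.2 (S.r_le_r2 (x1, x2, y)))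
    (S.sum_snd_r2_sub_r x1 y) x2
  have hq1 := mul_mul_inv_mul_of_sum_eq (fun x1 => S.inclusion_exclusion (x1, x2, y))
    (S.sum_fst_slack x2 y) x1
  have hq2 := mul_mul_inv_mul_of_sum_eq (fun x2 => S.inclusion_exclusion (x1, x2, y))
    (S.sum_snd_slack x1 y) x2
  simp only [toBox, ← mul_sum, ← sum_mul, sum_add_distrib, sum_ite_eq', mem_univ, if_true,
    sum_offDiagWeight]
  simp only [slack] at hq1 hq2 ⊢
  linear_combination ((k1 : ℝ) * k2)⁻¹ * (h1 + h2 + hq1 + ((k1 : ℝ) - 1) * ((k1 : ℝ) - 1)⁻¹ * hq2)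

variable [Fintype Y]

lemma isNSBox_toBox (hk1 : 0 < k1) (hk2 : 0 < k2) : IsNSBox k1 k2 S.toBox := by
  refine ⟨S.toBox_nonneg, fun i1 i2 y => ?_, fun x2 j1 j2 i1 i1' i2 y => ?_,
    fun x1 j1 j2 i1 i2 i2' y => ?_, fun x1 x2 i1 i2 y y' => ?_⟩
  · simp only [sum_msg_toBox, ← mul_sum, S.sum_sum_p y]
    field_simp
  · rw [sum_fst_toBox, sum_fst_toBox]
  · rw [sum_snd_toBox, sum_snd_toBox]
  · rw [sum_msg_toBox, sum_msg_toBox]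

lemma boxValue_toBox (W : X1 → X2 → Y → ℝ) (hk1 : 0 < k1) (hk2 : 0 < k2) :
    boxValue W S.toBox = S.value W := by
  simp only [boxValue, value, toBox_diag, sum_const, card_univ, Fintype.card_fin, nsmul_eq_mul,
    Fintype.sum_prod_type, mul_left_comm _ ((k1 : ℝ) * k2)⁻¹, ← mul_sum]
  field_simp

end LPSolution

lemma Wval_orbit {G X1 X2 Y : Type*} [Group G] [MulAction G X1] [MulAction G X2] [MulAction G Y]
    {W : X1 → X2 → Y → ℝ} (hInv : ∀ (g : G) x1 x2 y, W (g • x1) (g • x2) (g • y) = W x1 x2 y)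
    (t : X1 × X2 × Y) : Wval W (orbit G t) = W t.1 t.2.1 t.2.2 := by
  have hne : (orbit G t).Nonempty := ⟨t, mem_orbit_self t⟩
  obtain ⟨g, hg⟩ := hne.some_mem
  rw [Wval, dif_pos hne, ← hg]
  exact hInv g t.1 t.2.1 t.2.2

-- The fields list the constraints of `SNS_eq_orbitLP` in the same order, so that anonymous
-- constructors convert between the two.
structure OrbitLPSolution (G : Type*) [Group G] (X1 X2 Y : Type*)
    [MulAction G X1] [MulAction G X2] [MulAction G Y] (k1 k2 : ℕ) where
  r : Set (X1 × X2 × Y) → ℝ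
  r1 : Set (X1 × X2 × Y) → ℝ
  r2 : Set (X1 × X2 × Y) → ℝ
  p : Set (X1 × X2) → ℝ
  sum_r : ∀ v : Set Y, IsOrbit G v →
    orbitFiberSum G (fun t : X1 × X2 × Y => t.2.2) r v = (v.ncard : ℝ)
  sum_r1 : ∀ v2 : Set (X2 × Y), IsOrbit G v2 →
    orbitFiberSum G Prod.snd r1 v2 = (k1 : ℝ) * orbitFiberSum G Prod.snd r v2
  sum_r2 : ∀ v1 : Set (X1 × Y), IsOrbit G v1 →
    orbitFiberSum G (fun t : X1 × X2 × Y => (t.1, t.2.2)) r2 v1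
      = (k2 : ℝ) * orbitFiberSum G (fun t : X1 × X2 × Y => (t.1, t.2.2)) r v1
  sum_p_fst : ∀ v2 : Set (X2 × Y), IsOrbit G v2 →
    orbitFiberSum G Prod.snd p (Prod.fst '' v2)
      = ((Prod.fst '' v2).ncard : ℝ) / (v2.ncard : ℝ) * (k1 : ℝ) * orbitFiberSum G Prod.snd r2 v2
  sum_p_snd : ∀ v1 : Set (X1 × Y), IsOrbit G v1 →
    orbitFiberSum G Prod.fst p (Prod.fst '' v1)
      = ((Prod.fst '' v1).ncard : ℝ) / (v1.ncard : ℝ) * (k2 : ℝ)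
        * orbitFiberSum G (fun t : X1 × X2 × Y => (t.1, t.2.2)) r1 v1
  r_nonneg : ∀ w, IsOrbit G w → 0 ≤ r w
  r_le_r1 : ∀ w, IsOrbit G w → r w ≤ r1 w
  r1_le_p : ∀ w, IsOrbit G w →
    r1 w ≤ (w.ncard : ℝ) / ((fun t : X1 × X2 × Y => (t.1, t.2.1)) '' w).ncard
      * p ((fun t : X1 × X2 × Y => (t.1, t.2.1)) '' w)
  r_le_r2 : ∀ w, IsOrbit G w → r w ≤ r2 w
  r2_le_p : ∀ w, IsOrbit G w →
    r2 w ≤ (w.ncard : ℝ) / ((fun t : X1 × X2 × Y => (t.1, t.2.1)) '' w).ncard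
      * p ((fun t : X1 × X2 × Y => (t.1, t.2.1)) '' w)
  inclusion_exclusion : ∀ w, IsOrbit G w →
    0 ≤ (w.ncard : ℝ) / ((fun t : X1 × X2 × Y => (t.1, t.2.1)) '' w).ncard
      * p ((fun t : X1 × X2 × Y => (t.1, t.2.1)) '' w) - r1 w - r2 w + r w

namespace OrbitLPSolution

variable {G X1 X2 Y : Type*} [Group G] [MulAction G X1] [MulAction G X2] [MulAction G Y]
  {k1 k2 : ℕ}

noncomputable def value (W : X1 → X2 → Y → ℝ) (S : OrbitLPSolution G X1 X2 Y k1 k2) : ℝ :=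
  1 / ((k1 : ℝ) * k2) * ∑ᶠ w ∈ {w : Set (X1 × X2 × Y) | IsOrbit G w}, Wval W w * S.r w

variable [Fintype X1] [Fintype X2] [Fintype Y]

noncomputable def ofLP (S : LPSolution X1 X2 Y k1 k2) : OrbitLPSolution G X1 X2 Y k1 k2 where
  r w := ∑ t ∈ w.toFinset, S.r t
  r1 w := ∑ t ∈ w.toFinset, S.r1 t
  r2 w := ∑ t ∈ w.toFinset, S.r2 t
  p u := ∑ q ∈ u.toFinset, S.p q
  sum_r := by
    rintro v ⟨y, rfl⟩
    rw [orbitFiberSum_sum_toFinset (fun _ _ => rfl)]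
    simp [fiberSum_snd_snd, S.sum_r, Set.ncard_eq_toFinset_card']
  sum_r1 := by
    rintro v ⟨b, rfl⟩
    rw [orbitFiberSum_sum_toFinset (fun _ _ => rfl), orbitFiberSum_sum_toFinset (fun _ _ => rfl),
      mul_sum]
    exact sum_congr rfl fun b _ => by simp only [fiberSum_snd, S.sum_r1 b.1 b.2]
  sum_r2 := by
    rintro v ⟨b, rfl⟩
    rw [orbitFiberSum_sum_toFinset (fun _ _ => rfl), orbitFiberSum_sum_toFinset (fun _ _ => rfl),
      mul_sum]
    exact sum_congr rfl fun ⟨x1, y⟩ _ => by simp only [fiberSum_fst_snd_snd, S.sum_r2 x1 y]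
  sum_p_fst := by
    rintro v ⟨b, rfl⟩
    have h : ∀ b' : X2 × Y, k1 * fiberSum Prod.snd S.r2 b' = fiberSum Prod.snd S.p b'.1 := by
      rintro ⟨x2, y⟩
      rw [fiberSum_snd, fiberSum_snd, S.sum_p_fst x2 y]
    rw [image_orbit (fun _ _ => rfl), orbitFiberSum_sum_toFinset (fun _ _ => rfl),
      orbitFiberSum_sum_toFinset (fun _ _ => rfl), mul_assoc, mul_sum,
      sum_congr rfl fun b' _ => h b', sum_orbit_comp (f := Prod.fst) (fun _ _ => rfl), ← mul_assoc,
      div_mul_div_cancel₀ (orbit_ncard_pos b).ne', div_self (orbit_ncard_pos b.1).ne', one_mul]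
  sum_p_snd := by
    rintro v ⟨b, rfl⟩
    have h : ∀ b' : X1 × Y, k2 * fiberSum (fun t : X1 × X2 × Y => (t.1, t.2.2)) S.r1 b'
        = fiberSum Prod.fst S.p b'.1 := by
      rintro ⟨x1, y⟩
      rw [fiberSum_fst, fiberSum_fst_snd_snd, S.sum_p_snd x1 y]
    rw [image_orbit (fun _ _ => rfl), orbitFiberSum_sum_toFinset (fun _ _ => rfl),
      orbitFiberSum_sum_toFinset (fun _ _ => rfl), mul_assoc, mul_sum,
      sum_congr rfl fun b' _ => h b', sum_orbit_comp (f := Prod.fst) (fun _ _ => rfl), ← mul_assoc,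
      div_mul_div_cancel₀ (orbit_ncard_pos b).ne', div_self (orbit_ncard_pos b.1).ne', one_mul]
  r_nonneg := by
    rintro w ⟨t, rfl⟩
    exact sum_nonneg fun t _ => S.r_nonneg t
  r_le_r1 := by
    rintro w ⟨t, rfl⟩
    exact sum_le_sum fun t _ => S.r_le_r1 t
  r1_le_p := by
    rintro w ⟨t, rfl⟩
    rw [image_orbit (fun _ _ => rfl),
      ← sum_orbit_comp (f := fun t : X1 × X2 × Y => (t.1, t.2.1)) (fun _ _ => rfl)]
    exact sum_le_sum fun t _ => S.r1_le_p t
  r_le_r2 := by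
    rintro w ⟨t, rfl⟩
    exact sum_le_sum fun t _ => S.r_le_r2 t
  r2_le_p := by
    rintro w ⟨t, rfl⟩
    rw [image_orbit (fun _ _ => rfl),
      ← sum_orbit_comp (f := fun t : X1 × X2 × Y => (t.1, t.2.1)) (fun _ _ => rfl)]
    exact sum_le_sum fun t _ => S.r2_le_p t
  inclusion_exclusion := by
    rintro w ⟨t, rfl⟩
    rw [image_orbit (fun _ _ => rfl),
      ← sum_orbit_comp (f := fun t : X1 × X2 × Y => (t.1, t.2.1)) (fun _ _ => rfl),
      ← sum_sub_distrib, ← sum_sub_distrib, ← sum_add_distrib]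
    exact sum_nonneg fun t _ => S.inclusion_exclusion t

lemma value_ofLP {W : X1 → X2 → Y → ℝ}
    (hInv : ∀ (g : G) x1 x2 y, W (g • x1) (g • x2) (g • y) = W x1 x2 y)
    (S : LPSolution X1 X2 Y k1 k2) :
    (ofLP S : OrbitLPSolution G X1 X2 Y k1 k2).value W = S.value W := by
  rw [value, LPSolution.value]
  congr 1
  exact finsum_isOrbit_mul_sum (Wval_orbit hInv) (fun g t => hInv g t.1 t.2.1 t.2.2) S.r

noncomputable def toLP (S : OrbitLPSolution G X1 X2 Y k1 k2) : LPSolution X1 X2 Y k1 k2 where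
  r := orbitDensity G S.r
  r1 := orbitDensity G S.r1
  r2 := orbitDensity G S.r2
  p := orbitDensity G S.p
  r_nonneg t := div_nonneg (S.r_nonneg _ ⟨t, rfl⟩) (Nat.cast_nonneg _)
  r_le_r1 t := div_le_div_of_nonneg_right (S.r_le_r1 _ ⟨t, rfl⟩) (Nat.cast_nonneg _)
  r_le_r2 t := div_le_div_of_nonneg_right (S.r_le_r2 _ ⟨t, rfl⟩) (Nat.cast_nonneg _)
  inclusion_exclusion t := by
    have h := S.inclusion_exclusion _ ⟨t, rfl⟩
    rw [image_orbit (fun _ _ => rfl)] at h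
    have ht := orbit_ncard_pos (G := G) t
    have := orbit_ncard_pos (G := G) (t.1, t.2.1)
    calc 0 ≤ _ / ((orbit G t).ncard : ℝ) := div_nonneg h ht.le
      _ = _ := by
        unfold orbitDensity
        field_simp
  sum_r y := by
    rw [← fiberSum_snd_snd, fiberSum_orbitDensity (fun _ _ => rfl), S.sum_r _ ⟨y, rfl⟩,
      div_self (orbit_ncard_pos y).ne']
  sum_r1 x2 y := by
    rw [← fiberSum_snd, ← fiberSum_snd, fiberSum_orbitDensity (fun _ _ => rfl),
      fiberSum_orbitDensity (fun _ _ => rfl), S.sum_r1 _ ⟨(x2, y), rfl⟩, mul_div_assoc]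
  sum_r2 x1 y := by
    rw [← fiberSum_fst_snd_snd, ← fiberSum_fst_snd_snd, fiberSum_orbitDensity (fun _ _ => rfl),
      fiberSum_orbitDensity (fun _ _ => rfl), S.sum_r2 _ ⟨(x1, y), rfl⟩, mul_div_assoc]
  sum_p_fst x2 y := by
    have h := S.sum_p_fst _ ⟨(x2, y), rfl⟩
    rw [image_orbit (fun _ _ => rfl)] at h
    rw [← fiberSum_snd, ← fiberSum_snd, fiberSum_orbitDensity (fun _ _ => rfl),
      fiberSum_orbitDensity (fun _ _ => rfl), h]
    have := orbit_ncard_pos (G := G) x2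
    field_simp
  sum_p_snd x1 y := by
    have h := S.sum_p_snd _ ⟨(x1, y), rfl⟩
    rw [image_orbit (fun _ _ => rfl)] at h
    rw [← fiberSum_fst, ← fiberSum_fst_snd_snd, fiberSum_orbitDensity (fun _ _ => rfl),
      fiberSum_orbitDensity (fun _ _ => rfl), h]
    have := orbit_ncard_pos (G := G) x1
    field_simp

lemma value_toLP {W : X1 → X2 → Y → ℝ}
    (hInv : ∀ (g : G) x1 x2 y, W (g • x1) (g • x2) (g • y) = W x1 x2 y)
    (S : OrbitLPSolution G X1 X2 Y k1 k2) : S.toLP.value W = S.value W := by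
  rw [value, LPSolution.value]
  congr 1
  rw [← finsum_isOrbit_mul_sum (Wval_orbit hInv) (fun g t => hInv g t.1 t.2.1 t.2.2)]
  exact finsum_mem_congr rfl fun w ⟨a, ha⟩ => by rw [ha, toLP, sum_orbitDensity]

end OrbitLPSolution

theorem SNS_eq_orbitLP {G X1 X2 Y : Type*} [Group G]
    [Fintype X1] [Fintype X2] [Fintype Y]
    [MulAction G X1] [MulAction G X2] [MulAction G Y]
    (W : X1 → X2 → Y → ℝ)
    (hInv : ∀ (g : G) (x1 : X1) (x2 : X2) (y : Y),
      W (g • x1) (g • x2) (g • y) = W x1 x2 y)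
    (k1 k2 : ℕ) (hk1 : 0 < k1) (hk2 : 0 < k2) :
    SNS W k1 k2 = sSup {s : ℝ |
      ∃ (r r1 r2 : Set (X1 × X2 × Y) → ℝ) (p : Set (X1 × X2) → ℝ),
      -- first constraint: ∑_{w : w_Y = v} r_w = |v| for every orbit v of Y
      (∀ v : Set Y, IsOrbit G v →
        (∑ᶠ w ∈ {w : Set (X1 × X2 × Y) | IsOrbit G w ∧ (fun t => t.2.2) '' w = v}, r w)
          = (v.ncard : ℝ)) ∧
      -- ∑_{w : w_{X2 Y} = v2} r^1_w = k1 ∑_{w : w_{X2 Y} = v2} r_w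
      (∀ v2 : Set (X2 × Y), IsOrbit G v2 →
        (∑ᶠ w ∈ {w : Set (X1 × X2 × Y) | IsOrbit G w ∧ Prod.snd '' w = v2}, r1 w)
          = (k1 : ℝ) *
            ∑ᶠ w ∈ {w : Set (X1 × X2 × Y) | IsOrbit G w ∧ Prod.snd '' w = v2}, r w) ∧
      -- ∑_{w : w_{X1 Y} = v1} r^2_w = k2 ∑_{w : w_{X1 Y} = v1} r_w
      (∀ v1 : Set (X1 × Y), IsOrbit G v1 →
        (∑ᶠ w ∈ {w : Set (X1 × X2 × Y) |
            IsOrbit G w ∧ (fun t => (t.1, t.2.2)) '' w = v1}, r2 w)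
          = (k2 : ℝ) *
            ∑ᶠ w ∈ {w : Set (X1 × X2 × Y) |
              IsOrbit G w ∧ (fun t => (t.1, t.2.2)) '' w = v1}, r w) ∧
      -- ∑_{u : u_{X2} = (v2)_{X2}} p_u = (|(v2)_{X2}|/|v2|) k1 ∑_{w : w_{X2 Y} = v2} r^2_w
      (∀ v2 : Set (X2 × Y), IsOrbit G v2 →
        (∑ᶠ u ∈ {u : Set (X1 × X2) | IsOrbit G u ∧ Prod.snd '' u = Prod.fst '' v2}, p u)
          = ((Prod.fst '' v2).ncard : ℝ) / (v2.ncard : ℝ) * (k1 : ℝ) *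
            ∑ᶠ w ∈ {w : Set (X1 × X2 × Y) | IsOrbit G w ∧ Prod.snd '' w = v2}, r2 w) ∧
      -- ∑_{u : u_{X1} = (v1)_{X1}} p_u = (|(v1)_{X1}|/|v1|) k2 ∑_{w : w_{X1 Y} = v1} r^1_w
      (∀ v1 : Set (X1 × Y), IsOrbit G v1 →
        (∑ᶠ u ∈ {u : Set (X1 × X2) | IsOrbit G u ∧ Prod.fst '' u = Prod.fst '' v1}, p u)
          = ((Prod.fst '' v1).ncard : ℝ) / (v1.ncard : ℝ) * (k2 : ℝ) *
            ∑ᶠ w ∈ {w : Set (X1 × X2 × Y) |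
              IsOrbit G w ∧ (fun t => (t.1, t.2.2)) '' w = v1}, r1 w) ∧
      -- inequality constraints, with w_{X1 X2} the image of w in X1 × X2
      (∀ w : Set (X1 × X2 × Y), IsOrbit G w → 0 ≤ r w) ∧
      (∀ w : Set (X1 × X2 × Y), IsOrbit G w → r w ≤ r1 w) ∧
      (∀ w : Set (X1 × X2 × Y), IsOrbit G w →
        r1 w ≤ (w.ncard : ℝ) / ((((fun t => (t.1, t.2.1)) '' w : Set (X1 × X2)).ncard : ℝ))
          * p ((fun t => (t.1, t.2.1)) '' w)) ∧
      (∀ w : Set (X1 × X2 × Y), IsOrbit G w → r w ≤ r2 w) ∧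
      (∀ w : Set (X1 × X2 × Y), IsOrbit G w →
        r2 w ≤ (w.ncard : ℝ) / ((((fun t => (t.1, t.2.1)) '' w : Set (X1 × X2)).ncard : ℝ))
          * p ((fun t => (t.1, t.2.1)) '' w)) ∧
      (∀ w : Set (X1 × X2 × Y), IsOrbit G w →
        0 ≤ (w.ncard : ℝ) / ((((fun t => (t.1, t.2.1)) '' w : Set (X1 × X2)).ncard : ℝ))
            * p ((fun t => (t.1, t.2.1)) '' w) - r1 w - r2 w + r w) ∧
      -- objective value
      s = (1 / ((k1 : ℝ) * (k2 : ℝ))) *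
        ∑ᶠ w ∈ {w : Set (X1 × X2 × Y) | IsOrbit G w}, Wval W w * r w} := by
  rw [SNS]
  congr 1
  ext s
  constructor
  · rintro ⟨P, hP, rfl⟩
    let S : OrbitLPSolution G X1 X2 Y k1 k2 := .ofLP (.ofBox hP hk1 hk2)
    exact ⟨S.r, S.r1, S.r2, S.p, S.sum_r, S.sum_r1, S.sum_r2, S.sum_p_fst, S.sum_p_snd,
      S.r_nonneg, S.r_le_r1, S.r1_le_p, S.r_le_r2, S.r2_le_p, S.inclusion_exclusion,
      ((OrbitLPSolution.value_ofLP hInv _).trans (LPSolution.value_ofBox W hP hk1 hk2)).symm⟩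
  · rintro ⟨r, r1, r2, p, h1, h2, h3, h4, h5, h6, h7, h8, h9, h10, h11, rfl⟩
    let S : OrbitLPSolution G X1 X2 Y k1 k2 :=
      ⟨r, r1, r2, p, h1, h2, h3, h4, h5, h6, h7, h8, h9, h10, h11⟩
    exact ⟨S.toLP.toBox, S.toLP.isNSBox_toBox hk1 hk2,
      ((S.toLP.boxValue_toBox W hk1 hk2).trans (OrbitLPSolution.value_toLP hInv S)).symm⟩
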